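/- arXiv:1104.2683 — 2 statements merged into one kernel-verified Lean document; each statement's English description precedes it below -/
import Mathlib

section
/- Let α ∈ (0, π/2] and let Λ = {λ_k}_{k∈ℕ} ⊂ ℂ∖ℝ satisfy α ≤ |arg λ_k| ≤ π − α for all k, and let ε := Σ_{k∈ℕ} |Im(1/λ_k)| < +∞. Then for every nonnegative integrable function φ ∈ L¹(ℝ): Σ_{k∈ℕ} (P φ)(λ_k) ≤ (ε/(π sin²α)) · ∫_ℝ φ(x) dx, where (P φ)(z) = (1/π) ∫_ℝ |Im z| / ((t − Re z)² + (Im z)²) · φ(t) dt is the Poisson integral of φ at z ∈ ℂ∖ℝ. -/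
/-!
The Poisson kernel at `z` is bounded by `1 / |Im z|`, so `(Pφ)(z) ≤ ‖φ‖₁ / (π |Im z|)`.
In the sector `α ≤ |arg z| ≤ π - α` we have `|Im z| ≥ sin α · |z|`, hence
`1 / |Im z| ≤ |Im z| / (sin² α · |z|²) = |Im (1/z)| / sin² α`;
summing over `k` gives the bound.
-/

open MeasureTheory
open scoped ENNReal

/-- The Poisson kernel of the half-plane containing `z`, without the factor `1 / π`. -/
noncomputable def halfPlanePoissonKernel (z : ℂ) (t : ℝ) : ℝ :=
  |z.im| / ((t - z.re) ^ 2 + z.im ^ 2)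

lemma halfPlanePoissonKernel_nonneg (z : ℂ) (t : ℝ) : 0 ≤ halfPlanePoissonKernel z t := by
  unfold halfPlanePoissonKernel
  positivity

lemma halfPlanePoissonKernel_le_inv_abs_im (z : ℂ) (t : ℝ) :
    halfPlanePoissonKernel z t ≤ |z.im|⁻¹ := by
  rcases eq_or_ne z.im 0 with h | h
  · simp [halfPlanePoissonKernel, h]
  calc halfPlanePoissonKernel z t ≤ |z.im| / z.im ^ 2 :=
        div_le_div_of_nonneg_left (abs_nonneg _) (by positivity)
          (by nlinarith [sq_nonneg (t - z.re)])
    _ = |z.im|⁻¹ := by rw [← sq_abs, sq, div_mul_cancel_left₀ (abs_ne_zero.mpr h)]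

lemma integral_halfPlanePoissonKernel_mul_le {φ : ℝ → ℝ} (hφ : Integrable φ)
    (hpos : ∀ x, 0 ≤ φ x) (z : ℂ) :
    ∫ t, halfPlanePoissonKernel z t * φ t ≤ |z.im|⁻¹ * ∫ t, φ t := by
  rw [← integral_const_mul]
  refine integral_mono_of_nonneg (Filter.Eventually.of_forall fun t => ?_) (hφ.const_mul _)
    (Filter.Eventually.of_forall fun t => ?_)
  · exact mul_nonneg (halfPlanePoissonKernel_nonneg z t) (hpos t)
  · exact mul_le_mul_of_nonneg_right (halfPlanePoissonKernel_le_inv_abs_im z t) (hpos t)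

lemma Real.sin_le_abs_sin_of_mem_sector {α θ : ℝ} (hα : 0 ≤ α) (hθ : |θ| ≤ Real.pi)
    (h₁ : α ≤ |θ|) (h₂ : |θ| ≤ Real.pi - α) : Real.sin α ≤ |Real.sin θ| := by
  rw [Real.abs_sin_eq_sin_abs_of_abs_le_pi hθ]
  rcases le_total |θ| (Real.pi / 2) with h | h
  · exact Real.sin_le_sin_of_le_of_le_pi_div_two (by linarith [Real.pi_pos]) h h₁
  · rw [← Real.sin_pi_sub |θ|]
    exact Real.sin_le_sin_of_le_of_le_pi_div_two (by linarith [Real.pi_pos]) (by linarith)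
      (by linarith)

lemma Complex.sin_mul_norm_le_abs_im {α : ℝ} {z : ℂ} (hα : 0 ≤ α) (h₁ : α ≤ |z.arg|)
    (h₂ : |z.arg| ≤ Real.pi - α) : Real.sin α * ‖z‖ ≤ |z.im| := by
  rw [← Complex.norm_mul_sin_arg z, abs_mul, abs_norm, mul_comm]
  exact mul_le_mul_of_nonneg_left
    (Real.sin_le_abs_sin_of_mem_sector hα (Complex.abs_arg_le_pi z) h₁ h₂) (norm_nonneg z)

lemma Complex.inv_abs_im_le_abs_inv_im_div_sq {s : ℝ} {z : ℂ} (hs : 0 < s)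
    (h : s * ‖z‖ ≤ |z.im|) :
    |z.im|⁻¹ ≤ |(z⁻¹).im| / s ^ 2 := by
  rcases eq_or_ne z 0 with rfl | hz
  · simp
  have hnorm : 0 < ‖z‖ := norm_pos_iff.mpr hz
  have him : 0 < |z.im| := (mul_pos hs hnorm).trans_le h
  rw [Complex.inv_im, abs_div, abs_neg, abs_of_nonneg (Complex.normSq_nonneg z),
    ← Complex.sq_norm, div_div, le_div_iff₀ (by positivity), inv_mul_le_iff₀ him]
  nlinarith [mul_nonneg hs.le hnorm.le]

lemma ENNReal.tsum_ofReal_le_ofReal_tsum_mul {ι : Type*} {f g : ι → ℝ} {c : ℝ}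
    (hg : Summable g) (hg₀ : ∀ i, 0 ≤ g i) (hc : 0 ≤ c) (hfg : ∀ i, f i ≤ g i * c) :
    ∑' i, ENNReal.ofReal (f i) ≤ ENNReal.ofReal ((∑' i, g i) * c) := by
  rw [← tsum_mul_right, ENNReal.ofReal_tsum_of_nonneg (fun i => mul_nonneg (hg₀ i) hc)
    (hg.mul_right c)]
  exact ENNReal.tsum_le_tsum fun i => ENNReal.ofReal_le_ofReal (hfg i)

theorem poisson_sum_bound_general (α : ℝ) (hα : α ∈ Set.Ioc 0 (Real.pi / 2))
    (Λ : ℕ → ℂ)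
    (harg : ∀ k, α ≤ |(Λ k).arg| ∧ |(Λ k).arg| ≤ Real.pi - α)
    (hsum : Summable fun k => |((Λ k)⁻¹).im|)
    (φ : ℝ → ℝ) (hint : Integrable φ) (hpos : ∀ x, 0 ≤ φ x) :
    (∑' k : ℕ, ENNReal.ofReal
        ((1 / Real.pi) *
          ∫ t : ℝ, (|(Λ k).im| / ((t - (Λ k).re) ^ 2 + (Λ k).im ^ 2)) * φ t))
      ≤ ENNReal.ofReal
          (((∑' k : ℕ, |((Λ k)⁻¹).im|) / (Real.pi * Real.sin α ^ 2)) *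
            ∫ x : ℝ, φ x) := by
  have hs : 0 < Real.sin α :=
    Real.sin_pos_of_pos_of_lt_pi hα.1 (by linarith [hα.2, Real.pi_pos])
  have hI : 0 ≤ ∫ x, φ x := integral_nonneg hpos
  rw [div_mul_eq_mul_div, mul_div_assoc]
  refine ENNReal.tsum_ofReal_le_ofReal_tsum_mul hsum (fun k => abs_nonneg _) (by positivity)
    fun k => ?_
  have hsector : Real.sin α * ‖Λ k‖ ≤ |(Λ k).im| :=
    Complex.sin_mul_norm_le_abs_im hα.1.le (harg k).1 (harg k).2
  have hinv : |(Λ k).im|⁻¹ ≤ |((Λ k)⁻¹).im| / Real.sin α ^ 2 :=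
    Complex.inv_abs_im_le_abs_inv_im_div_sq hs hsector
  calc (1 / Real.pi) * ∫ t : ℝ, halfPlanePoissonKernel (Λ k) t * φ t
      ≤ (1 / Real.pi) * (|((Λ k)⁻¹).im| / Real.sin α ^ 2 * ∫ t, φ t) := by
        gcongr
        exact (integral_halfPlanePoissonKernel_mul_le hint hpos (Λ k)).trans (by gcongr)
    _ = |((Λ k)⁻¹).im| * ((∫ x, φ x) / (Real.pi * Real.sin α ^ 2)) := by
        field_simp

/-- if `Λ ⊂ ℂ∖ℝ` satisfies `α ≤ |arg λ_k| ≤ π − α` with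
`0 < α ≤ π/2`, and `ε := Σ_k |Im(1/λ_k)| < ∞`, then for every nonnegative
`φ ∈ L¹(ℝ)`, `Σ_k (Pφ)(λ_k) ≤ (ε/(π sin²α)) ∫ φ`. -/
theorem poisson_sum_bound (α : ℝ) (hα : α ∈ Set.Ioc 0 (Real.pi / 2))
    (Λ : ℕ → ℂ) (hΛ : ∀ k, (Λ k).im ≠ 0)
    (harg : ∀ k, α ≤ |(Λ k).arg| ∧ |(Λ k).arg| ≤ Real.pi - α)
    (hsum : Summable fun k => |((Λ k)⁻¹).im|)
    (φ : ℝ → ℝ) (hint : Integrable φ) (hpos : ∀ x, 0 ≤ φ x) :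
    (∑' k : ℕ, ENNReal.ofReal
        ((1 / Real.pi) *
          ∫ t : ℝ, (|(Λ k).im| / ((t - (Λ k).re) ^ 2 + (Λ k).im ^ 2)) * φ t))
      ≤ ENNReal.ofReal
          (((∑' k : ℕ, |((Λ k)⁻¹).im|) / (Real.pi * Real.sin α ^ 2)) *
            ∫ x : ℝ, φ x) :=
  poisson_sum_bound_general α hα Λ harg hsum φ hint hpos
end

section
/- For every φ ∈ C_c^∞(ℝ) (infinitely differentiable with compact support) and every x ∈ ℝ, the Hilbert transform (H φ)(x) := (1/π) p.v. ∫_ℝ φ(t)/(x − t) dt is well defined, the function H φ is differentiable, and the Hilbert transform commutes with differentiation: (H φ)'(x) = (H φ')(x) for all x ∈ ℝ. -/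
open MeasureTheory Filter Set
open scoped Topology

/-- The regularized kernel of the Hilbert transform. -/
noncomputable def HTK (ψ : ℝ → ℝ) (x s : ℝ) : ℝ :=
  if |s| ≤ 1 then (ψ (x - s) - ψ x) / s else ψ (x - s) / s

lemma HTK_meas (ψ : ℝ → ℝ) (hψ : Continuous ψ) (x : ℝ) :
    Measurable (HTK ψ x) := by
  apply Measurable.ite (measurableSet_le (by fun_prop) measurable_const)
  · exact ((hψ.measurable.comp (by fun_prop)).sub measurable_const).div measurable_id
  · exact (hψ.measurable.comp (by fun_prop)).div measurable_id

lemma HTK_le (ψ : ℝ → ℝ) (L C R M : ℝ) (hL : 0 ≤ L) (hC : 0 ≤ C)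
    (hlip : ∀ a b : ℝ, |ψ a - ψ b| ≤ L * |a - b|)
    (hbd : ∀ y, |ψ y| ≤ C)
    (hsup : ∀ y, R < |y| → ψ y = 0)
    (x : ℝ) (hx : |x| + R ≤ M) (s : ℝ) :
    |HTK ψ x s| ≤ Set.indicator (Icc (-1 : ℝ) 1) (fun _ => L) s
      + Set.indicator (Icc (-M) M) (fun _ => C) s := by
  have hind1 : (0:ℝ) ≤ Set.indicator (Icc (-1 : ℝ) 1) (fun _ => L) s :=
    Set.indicator_nonneg (fun _ _ => hL) s
  have hind2 : (0:ℝ) ≤ Set.indicator (Icc (-M) M) (fun _ => C) s :=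
    Set.indicator_nonneg (fun _ _ => hC) s
  by_cases h1 : |s| ≤ 1
  · rw [HTK, if_pos h1]
    have hs1 : s ∈ Icc (-1 : ℝ) 1 := abs_le.1 h1
    rw [Set.indicator_of_mem hs1]
    have : |(ψ (x - s) - ψ x) / s| ≤ L := by
      rcases eq_or_ne s 0 with rfl | hs
      · simpa using hL
      · rw [abs_div, div_le_iff₀ (abs_pos.2 hs)]
        calc |ψ (x - s) - ψ x| ≤ L * |x - s - x| := hlip _ _
          _ = L * |s| := by rw [show x - s - x = -s by ring, abs_neg]
    linarith
  · rw [HTK, if_neg h1]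
    push_neg at h1
    by_cases hz : ψ (x - s) = 0
    · simp only [hz, zero_div, abs_zero]
      linarith
    · have hxs : |x - s| ≤ R := by
        by_contra hcon
        push_neg at hcon
        exact hz (hsup _ hcon)
      have hsM : s ∈ Icc (-M) M := by
        have : |s| ≤ M := by
          have : |s| ≤ |x| + |x - s| := by
            have := abs_sub_abs_le_abs_sub s x
            have h2 := abs_sub_comm s x
            calc |s| ≤ |x| + |s - x| := by
                  have := abs_add_le x (s - x); simpa using this
              _ = |x| + |x - s| := by rw [abs_sub_comm]
          linarith
        exact abs_le.1 this
      rw [Set.indicator_of_mem hsM]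
      have : |ψ (x - s) / s| ≤ C := by
        rw [abs_div]
        calc |ψ (x - s)| / |s| ≤ |ψ (x - s)| / 1 :=
              div_le_div_of_nonneg_left (abs_nonneg _) one_pos h1.le |>.trans_eq rfl
          _ = |ψ (x - s)| := div_one _
          _ ≤ C := hbd _
      linarith

lemma HT_ind_integrable (a b c : ℝ) :
    Integrable (Set.indicator (Icc a b) (fun _ => c)) := by
  rw [integrable_indicator_iff measurableSet_Icc]
  exact integrableOn_const measure_Icc_lt_top.ne

/-- Extraction of Lipschitz/bound/support constants. -/
lemma HT_exists_LCR (ψ : ℝ → ℝ) (hψ : ContDiff ℝ (⊤ : ℕ∞) ψ) (hs : HasCompactSupport ψ) :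
    ∃ L C R : ℝ, 0 ≤ L ∧ 0 ≤ C ∧ 0 ≤ R ∧
      (∀ a b : ℝ, |ψ a - ψ b| ≤ L * |a - b|) ∧
      (∀ y, |ψ y| ≤ C) ∧ (∀ y, R < |y| → ψ y = 0) := by
  obtain ⟨K, hK⟩ := ContDiff.lipschitzWith_of_hasCompactSupport hs hψ (by simp)
  obtain ⟨C, hC⟩ := hs.exists_bound_of_continuous hψ.continuous
  obtain ⟨R, hR⟩ := hs.isBounded.subset_closedBall 0
  refine ⟨K, max C 0, max R 0, K.2, le_max_right _ _, le_max_right _ _, ?_, ?_, ?_⟩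
  · intro a b
    have := hK.dist_le_mul a b
    simpa [Real.dist_eq] using this
  · intro y
    exact le_trans (hC y) (le_max_left _ _)
  · intro y hy
    by_contra hz
    have hy' : y ∈ tsupport ψ := subset_closure (by simpa [Function.mem_support] using hz)
    have := hR hy'
    rw [Metric.mem_closedBall, Real.dist_eq, sub_zero] at this
    have : |y| ≤ max R 0 := le_trans this (le_max_left _ _)
    linarith

lemma HTK_integrable (ψ : ℝ → ℝ) (hψ : ContDiff ℝ (⊤ : ℕ∞) ψ) (hs : HasCompactSupport ψ) (x : ℝ) :
    Integrable (HTK ψ x) := by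
  obtain ⟨L, C, R, hL, hC, hR, hlip, hbd, hsup⟩ := HT_exists_LCR ψ hψ hs
  refine ((HT_ind_integrable (-1) 1 L).add
    (HT_ind_integrable (-(|x| + R)) (|x| + R) C)).mono'
    (HTK_meas ψ hψ.continuous x).aestronglyMeasurable
    (ae_of_all _ fun s => ?_)
  simpa using HTK_le ψ L C R (|x| + R) hL hC hlip hbd hsup x le_rfl s

lemma HT_set_eq {ε : ℝ} (hε : 0 < ε) (hε1 : ε ≤ 1) :
    {s : ℝ | ε ≤ |s| ∧ |s| ≤ 1} = Icc (-1 : ℝ) (-ε) ∪ Icc ε 1 := by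
  ext s
  simp only [Set.mem_setOf_eq, Set.mem_union, Set.mem_Icc]
  constructor
  · rintro ⟨h1, h2⟩
    rw [abs_le] at h2
    rcases le_abs.1 h1 with h | h
    · right; exact ⟨h, h2.2⟩
    · left; exact ⟨h2.1, by linarith⟩
  · rintro (⟨h1, h2⟩ | ⟨h1, h2⟩)
    · exact ⟨le_abs.2 (Or.inr (by linarith)), abs_le.2 ⟨h1, by linarith⟩⟩
    · exact ⟨le_abs.2 (Or.inl h1), abs_le.2 ⟨by linarith, h2⟩⟩

lemma HT_pv_zero (c : ℝ) {ε : ℝ} (hε : 0 < ε) (hε1 : ε ≤ 1) :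
    ∫ s in {s : ℝ | ε ≤ |s| ∧ |s| ≤ 1}, c * (1 / s) = 0 := by
  have hd : Disjoint (Icc (-1 : ℝ) (-ε)) (Icc ε 1) := by
    rw [Set.disjoint_left]
    rintro s ⟨h1, h2⟩ ⟨h3, h4⟩
    linarith
  have hco1 : ContinuousOn (fun s : ℝ => c * (1 / s)) (Icc (-1 : ℝ) (-ε)) := by
    refine continuousOn_const.mul (continuousOn_const.div continuousOn_id fun s hs => ?_)
    have : s ≤ -ε := hs.2
    intro h; rw [h] at this; linarith
  have hco2 : ContinuousOn (fun s : ℝ => c * (1 / s)) (Icc ε 1) := by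
    refine continuousOn_const.mul (continuousOn_const.div continuousOn_id fun s hs => ?_)
    have : ε ≤ s := hs.1
    intro h; rw [h] at this; linarith
  have hi1 : IntegrableOn (fun s : ℝ => c * (1 / s)) (Icc (-1 : ℝ) (-ε)) :=
    hco1.integrableOn_Icc
  have hi2 : IntegrableOn (fun s : ℝ => c * (1 / s)) (Icc ε 1) := hco2.integrableOn_Icc
  rw [HT_set_eq hε hε1, setIntegral_union hd measurableSet_Icc hi1 hi2]
  have e1 : ∫ s in Icc (-1 : ℝ) (-ε), c * (1 / s) = c * Real.log ε := by
    rw [integral_Icc_eq_integral_Ioc, ← intervalIntegral.integral_of_le (by linarith),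
      intervalIntegral.integral_const_mul, integral_one_div ?h0]
    · rw [show (-ε) / (-1 : ℝ) = ε by ring]
    case h0 =>
      rw [Set.uIcc_of_le (by linarith : (-1:ℝ) ≤ -ε)]
      rintro ⟨h1, h2⟩
      linarith
  have e2 : ∫ s in Icc ε 1, c * (1 / s) = c * Real.log (1 / ε) := by
    rw [integral_Icc_eq_integral_Ioc, ← intervalIntegral.integral_of_le hε1,
      intervalIntegral.integral_const_mul, integral_one_div ?h0]
    case h0 =>
      rw [Set.uIcc_of_le hε1]
      rintro ⟨h1, h2⟩
      linarith
  rw [e1, e2, one_div, Real.log_inv]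
  ring

lemma HT_trunc_eq (ψ : ℝ → ℝ) (hψ : ContDiff ℝ (⊤ : ℕ∞) ψ) (hs : HasCompactSupport ψ) (x : ℝ)
    {ε : ℝ} (hε : 0 < ε) (hε1 : ε ≤ 1) :
    ∫ t in {t : ℝ | ε ≤ |t - x|}, ψ t / (x - t)
      = ∫ s, Set.indicator {s : ℝ | ε ≤ |s|} (HTK ψ x) s := by
  have hint := HTK_integrable ψ hψ hs x
  have hSm : MeasurableSet {t : ℝ | ε ≤ |t - x|} :=
    measurableSet_le measurable_const (by fun_prop)
  have hεm : MeasurableSet {s : ℝ | ε ≤ |s|} :=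
    measurableSet_le measurable_const (by fun_prop)
  have hAm : MeasurableSet {s : ℝ | ε ≤ |s| ∧ |s| ≤ 1} := by
    have : {s : ℝ | ε ≤ |s| ∧ |s| ≤ 1} = {s : ℝ | ε ≤ |s|} ∩ {s : ℝ | |s| ≤ 1} := rfl
    rw [this]
    exact (measurableSet_le measurable_const continuous_abs.measurable).inter
      (measurableSet_le continuous_abs.measurable measurable_const)
  have hI1 : Integrable (Set.indicator {s : ℝ | ε ≤ |s|} (HTK ψ x)) := hint.indicator hεm
  have hI2 : Integrable
      (Set.indicator {s : ℝ | ε ≤ |s| ∧ |s| ≤ 1} (fun s : ℝ => ψ x * (1 / s))) := by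
    rw [integrable_indicator_iff hAm, HT_set_eq hε hε1]
    apply IntegrableOn.union
    · refine (continuousOn_const.mul (continuousOn_const.div continuousOn_id
        fun s hs => ?_)).integrableOn_Icc
      have : s ≤ -ε := hs.2
      intro h; simp only [id_eq] at h; subst h; linarith
    · refine (continuousOn_const.mul (continuousOn_const.div continuousOn_id
        fun s hs => ?_)).integrableOn_Icc
      have : ε ≤ s := hs.1
      intro h; simp only [id_eq] at h; subst h; linarith
  have key : ∀ s : ℝ,
      Set.indicator {t : ℝ | ε ≤ |t - x|} (fun t => ψ t / (x - t)) (x - s)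
        = Set.indicator {s : ℝ | ε ≤ |s|} (HTK ψ x) s
          + Set.indicator {s : ℝ | ε ≤ |s| ∧ |s| ≤ 1} (fun s : ℝ => ψ x * (1 / s)) s := by
    intro s
    have hv : x - s - x = -s := by ring
    have hv2 : x - (x - s) = s := by ring
    simp only [Set.indicator_apply, Set.mem_setOf_eq, hv, abs_neg, hv2]
    by_cases h : ε ≤ |s|
    · rw [if_pos h, if_pos h]
      by_cases h1 : |s| ≤ 1
      · rw [if_pos ⟨h, h1⟩, HTK, if_pos h1, sub_div, mul_one_div]
        ring
      · rw [if_neg fun hc => h1 hc.2, HTK, if_neg h1, add_zero]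
    · rw [if_neg h, if_neg h, if_neg fun hc => h hc.1, add_zero]
  calc ∫ t in {t : ℝ | ε ≤ |t - x|}, ψ t / (x - t)
      = ∫ t, Set.indicator {t : ℝ | ε ≤ |t - x|} (fun t => ψ t / (x - t)) t := by
        rw [integral_indicator hSm]
    _ = ∫ s, Set.indicator {t : ℝ | ε ≤ |t - x|} (fun t => ψ t / (x - t)) (x - s) := by
        rw [integral_sub_left_eq_self
          (fun t => Set.indicator {t : ℝ | ε ≤ |t - x|} (fun t => ψ t / (x - t)) t) volume x]
    _ = ∫ s, (Set.indicator {s : ℝ | ε ≤ |s|} (HTK ψ x) s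
          + Set.indicator {s : ℝ | ε ≤ |s| ∧ |s| ≤ 1} (fun s : ℝ => ψ x * (1 / s)) s) := by
        exact integral_congr_ae (ae_of_all _ key)
    _ = (∫ s, Set.indicator {s : ℝ | ε ≤ |s|} (HTK ψ x) s)
          + ∫ s, Set.indicator {s : ℝ | ε ≤ |s| ∧ |s| ≤ 1} (fun s : ℝ => ψ x * (1 / s)) s :=
        integral_add hI1 hI2
    _ = ∫ s, Set.indicator {s : ℝ | ε ≤ |s|} (HTK ψ x) s := by
        rw [integral_indicator hAm, HT_pv_zero (ψ x) hε hε1, add_zero]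

lemma HT_tendsto (ψ : ℝ → ℝ) (hψ : ContDiff ℝ (⊤ : ℕ∞) ψ) (hs : HasCompactSupport ψ) (x : ℝ) :
    Tendsto (fun ε : ℝ => ∫ t in {t : ℝ | ε ≤ |t - x|}, ψ t / (x - t)) (𝓝[>] 0)
      (𝓝 (∫ s, HTK ψ x s)) := by
  have hint := HTK_integrable ψ hψ hs x
  have hεm : ∀ ε : ℝ, MeasurableSet {s : ℝ | ε ≤ |s|} := fun ε =>
    measurableSet_le measurable_const continuous_abs.measurable
  have h2 : Tendsto (fun ε : ℝ => ∫ s, Set.indicator {s : ℝ | ε ≤ |s|} (HTK ψ x) s)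
      (𝓝[>] 0) (𝓝 (∫ s, HTK ψ x s)) := by
    apply tendsto_integral_filter_of_dominated_convergence (fun s => |HTK ψ x s|)
    · exact Eventually.of_forall fun ε =>
        ((HTK_meas ψ hψ.continuous x).indicator (hεm ε)).aestronglyMeasurable
    · refine Eventually.of_forall fun ε => ae_of_all _ fun s => ?_
      simpa using norm_indicator_le_norm_self (HTK ψ x) s
    · exact hint.abs
    · have h0 : ∀ᵐ s : ℝ, s ≠ 0 := by
        refine ae_iff.2 ?_
        simpa using measure_singleton (0 : ℝ)
      refine h0.mono fun s hs0 => ?_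
      have habs : 0 < |s| := abs_pos.2 hs0
      refine Tendsto.congr' ?_ tendsto_const_nhds
      filter_upwards [Ioo_mem_nhdsGT_of_mem (by exact ⟨le_refl 0, habs⟩ : (0:ℝ) ∈ Ico 0 |s|)]
        with ε hε
      exact (Set.indicator_of_mem (show s ∈ {s : ℝ | ε ≤ |s|} from hε.2.le) (HTK ψ x)).symm
  refine h2.congr' ?_
  filter_upwards [Ioc_mem_nhdsGT_of_mem (by exact ⟨le_refl 0, one_pos⟩ : (0:ℝ) ∈ Ico 0 1)]
    with ε hε
  exact (HT_trunc_eq ψ hψ hs x hε.1 hε.2).symm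

lemma HT_hasDerivAt (ψ : ℝ → ℝ) (hψ : ContDiff ℝ (⊤ : ℕ∞) ψ) (hs : HasCompactSupport ψ) (x₀ : ℝ) :
    HasDerivAt (fun x => ∫ s, HTK ψ x s) (∫ s, HTK (deriv ψ) x₀ s) x₀ := by
  have hψtop : ContDiff ℝ (((⊤ : ℕ∞) : WithTop ℕ∞) + 1) ψ := by exact hψ.of_le (by simp)
  have hψ' : ContDiff ℝ (⊤ : ℕ∞) (deriv ψ) := (contDiff_succ_iff_deriv.mp hψtop).2.2
  have hs' : HasCompactSupport (deriv ψ) := hs.deriv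
  obtain ⟨L, C, R, hL, hC, hR, hlip, hbd, hsup⟩ := HT_exists_LCR (deriv ψ) hψ' hs'
  set M : ℝ := |x₀| + 1 + R with hM
  have h0 : ∀ᵐ s : ℝ, s ≠ 0 := by
    refine ae_iff.2 ?_
    simpa using measure_singleton (0 : ℝ)
  refine (hasDerivAt_integral_of_dominated_loc_of_deriv_le (F := fun x s => HTK ψ x s)
    (F' := fun x s => HTK (deriv ψ) x s)
    (bound := fun s => Set.indicator (Icc (-1 : ℝ) 1) (fun _ => L) s
      + Set.indicator (Icc (-M) M) (fun _ => C) s)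
    (Metric.ball_mem_nhds x₀ one_pos) ?_ ?_ ?_ ?_ ?_ ?_).2
  · exact Eventually.of_forall fun x =>
      (HTK_meas ψ hψ.continuous x).aestronglyMeasurable
  · exact HTK_integrable ψ hψ hs x₀
  · exact (HTK_meas (deriv ψ) hψ'.continuous x₀).aestronglyMeasurable
  · refine ae_of_all _ fun s x hx => ?_
    have hxM : |x| + R ≤ M := by
      have : |x| ≤ |x₀| + 1 := by
        have := abs_sub_abs_le_abs_sub x x₀
        have hd : |x - x₀| < 1 := by simpa [Real.dist_eq] using Metric.mem_ball.1 hx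
        linarith
      linarith [hM ▸ le_refl M]
    simpa using HTK_le (deriv ψ) L C R M hL hC hlip hbd hsup x hxM s
  · exact (HT_ind_integrable (-1) 1 L).add (HT_ind_integrable (-M) M C)
  · refine h0.mono fun s hs0 x _ => ?_
    have hder : ∀ y : ℝ, HasDerivAt ψ (deriv ψ y) y := fun y =>
      (hψ.differentiable (by simp) y).hasDerivAt
    have hcomp : HasDerivAt (fun x : ℝ => ψ (x - s)) (deriv ψ (x - s)) x := by
      exact HasDerivAt.comp_sub_const x s (hder (x - s))
    by_cases h1 : |s| ≤ 1
    · simp only [HTK, if_pos h1]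
      exact (hcomp.sub (hder x)).div_const s
    · simp only [HTK, if_neg h1]
      exact hcomp.div_const s

/-- for `φ ∈ C_c^∞(ℝ)` the Hilbert transform
`(Hφ)(x) = (1/π) p.v. ∫ φ(t)/(x−t) dt` is well defined at every point, `Hφ` is
differentiable, and `(Hφ)' = H(φ')`. -/
theorem hilbert_transform_commutes_deriv (φ : ℝ → ℝ)
    (hφ : ContDiff ℝ (⊤ : ℕ∞) φ) (hsupp : HasCompactSupport φ) :
    ∃ H : ℝ → ℝ,
      (∀ x : ℝ, Filter.Tendsto
        (fun ε : ℝ => (1 / Real.pi) * ∫ t in {t : ℝ | ε ≤ |t - x|}, φ t / (x - t))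
        (𝓝[>] 0) (𝓝 (H x))) ∧
      Differentiable ℝ H ∧
      (∀ x : ℝ, Filter.Tendsto
        (fun ε : ℝ =>
          (1 / Real.pi) * ∫ t in {t : ℝ | ε ≤ |t - x|}, deriv φ t / (x - t))
        (𝓝[>] 0) (𝓝 (deriv H x))) := by
  have hφtop : ContDiff ℝ (((⊤ : ℕ∞) : WithTop ℕ∞) + 1) φ := by exact hφ.of_le (by simp)
  have hφ' : ContDiff ℝ (⊤ : ℕ∞) (deriv φ) := (contDiff_succ_iff_deriv.mp hφtop).2.2
  have hs' : HasCompactSupport (deriv φ) := hsupp.deriv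
  refine ⟨fun x => (1 / Real.pi) * ∫ s, HTK φ x s, ?_, ?_, ?_⟩
  · intro x
    exact (HT_tendsto φ hφ hsupp x).const_mul (1 / Real.pi)
  · intro x
    exact ((HT_hasDerivAt φ hφ hsupp x).const_mul (1 / Real.pi)).differentiableAt
  · intro x
    have hd : HasDerivAt (fun x => (1 / Real.pi) * ∫ s, HTK φ x s)
        ((1 / Real.pi) * ∫ s, HTK (deriv φ) x s) x :=
      (HT_hasDerivAt φ hφ hsupp x).const_mul (1 / Real.pi)
    rw [hd.deriv]
    exact (HT_tendsto (deriv φ) hφ' hs' x).const_mul (1 / Real.pi)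
end
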